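/- Let h : V → ℝ with μ-average h̄ < 0. Then there exists a constant C_h > 0 such that for every c with -C_h ≤ c < 0, the equation Δ_p u = c - h e^u admits an upper solution u₊ (i.e., Δ_p u₊ - c + h e^{u₊} ≤ 0 on V); consequently it has a solution for every c ∈ (c₋(h), 0) for some c₋(h) ∈ [-∞, 0). -/

import Mathlib

open Finset Real

/-- The discrete `p`-Laplacian on a weighted graph with adjacency `A`,
edge weights `ω` and vertex measure `μ`:
`(Δ_p f)_i = (1/μ_i) Σ_{j ∼ i} ω_{ij} |f_j - f_i|^{p-2} (f_j - f_i)`. -/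
noncomputable def pLap {V : Type*} [Fintype V] (p : ℝ) (A : V → V → Prop) [DecidableRel A]
    (ω : V → V → ℝ) (μ : V → ℝ) (f : V → ℝ) : V → ℝ :=
  fun i => (1 / μ i) * ∑ j, if A i j then ω i j * |f j - f i| ^ (p - 2) * (f j - f i) else 0

/-- Sum of a symmetric function `g` over the (unordered) edges of the graph:
`Σ_{i∼j} g_{ij} = (1/2) Σ_i Σ_{j : A i j} g i j`. -/
noncomputable def edgeSum {V : Type*} [Fintype V] (A : V → V → Prop) [DecidableRel A]
    (g : V → V → ℝ) : ℝ :=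
  (1 / 2) * ∑ i, ∑ j, if A i j then g i j else 0

/-!
First solve `Δ_p v = h̄ - h`, whose right-hand side has `μ`-mean zero, by minimizing the energy.
Since `Δ_p` and `exp` both scale by `δ ^ (p - 1)` under `v ↦ δ v + (p - 1) log δ`, this
`b` satisfies `Δ_p b + h e^b = δ ^ (p - 1) (h̄ + h (e^{δ v} - 1)) ≤ δ ^ (p - 1) h̄ / 2 =: -C_h`
for small `δ > 0`, so it is an upper solution for every `c ≥ -C_h`.

For `-C_h < c < 0` the upper solution is strict. Minimizing the functional of the equation with
`exp` truncated at `b` gives a critical point `u`; the functional is coercive by a discrete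
Poincaré inequality, because `c < 0` and because `∑ μ (c - h e^b) > 0` (sum the strict
inequality, the fluxes cancel). At a vertex where `u - b` is maximal and positive, `Δ_p u ≤ Δ_p b`
by monotonicity of `t ↦ |t|^{p-2} t`, contradicting the equations; so `u ≤ b`, the truncation is
inactive, and `u` is a solution.
-/

noncomputable def phiP (p t : ℝ) : ℝ := |t| ^ (p - 2) * t

lemma phiP_neg (p t : ℝ) : phiP p (-t) = -phiP p t := by
  simp only [phiP, abs_neg, mul_neg]

lemma phiP_of_nonneg {p t : ℝ} (hp : 1 < p) (ht : 0 ≤ t) : phiP p t = t ^ (p - 1) := by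
  rcases ht.eq_or_lt with rfl | ht
  · simp [phiP, Real.zero_rpow (by linarith : p - 1 ≠ 0)]
  · rw [phiP, abs_of_pos ht, show p - 1 = p - 2 + 1 by ring, Real.rpow_add_one ht.ne']

lemma phiP_monotone {p : ℝ} (hp : 1 < p) : Monotone (phiP p) := by
  have hmono : MonotoneOn (phiP p) (Set.Ici 0) := fun x hx y hy hxy => by
    rw [phiP_of_nonneg hp hx, phiP_of_nonneg hp hy]
    exact Real.rpow_le_rpow hx hxy (by linarith)
  have hodd : MonotoneOn (phiP p) (Set.Iic 0) := fun x hx y hy hxy => by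
    have := hmono (Set.mem_Ici.mpr (neg_nonneg.mpr hy)) (Set.mem_Ici.mpr (neg_nonneg.mpr hx))
      (neg_le_neg hxy)
    rwa [phiP_neg, phiP_neg, neg_le_neg_iff] at this
  exact hodd.Iic_union_Ici hmono

lemma phiP_mul {p δ : ℝ} (hδ : 0 < δ) (t : ℝ) : phiP p (δ * t) = δ ^ (p - 1) * phiP p t := by
  rw [phiP, phiP, abs_mul, abs_of_pos hδ, Real.mul_rpow hδ.le (abs_nonneg t),
    show p - 1 = p - 2 + 1 by ring, Real.rpow_add_one hδ.ne']
  ring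

lemma hasDerivAt_abs_rpow_phiP {p : ℝ} (hp : 1 < p) (t : ℝ) :
    HasDerivAt (fun s => |s| ^ p) (p * phiP p t) t := by
  simpa only [phiP, mul_assoc] using hasDerivAt_abs_rpow t hp

section Graph

variable {V : Type*} [Fintype V] (A : V → V → Prop) [DecidableRel A] (ω : V → V → ℝ) (p : ℝ)

noncomputable def pFlux (u : V → ℝ) (i : V) : ℝ :=
  ∑ j, if A i j then ω i j * phiP p (u j - u i) else 0

noncomputable def pEnergy (u : V → ℝ) : ℝ :=
  edgeSum A fun i j => ω i j * |u j - u i| ^ p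

variable {A ω p}

lemma pLap_eq_pFlux_div (μ u : V → ℝ) (i : V) : pLap p A ω μ u i = pFlux A ω p u i / μ i := by
  simp only [pLap, pFlux, phiP, mul_assoc, one_div_mul_eq_div]

lemma pFlux_smul_add_const {δ : ℝ} (hδ : 0 < δ) (v : V → ℝ) (a : ℝ) (i : V) :
    pFlux A ω p (fun j => δ * v j + a) i = δ ^ (p - 1) * pFlux A ω p v i := by
  simp only [pFlux, Finset.mul_sum, add_sub_add_right_eq_sub, ← mul_sub, phiP_mul hδ]
  refine Finset.sum_congr rfl fun j _ => ?_
  split_ifs <;> ring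

lemma sum_pFlux_mul (hA : Symmetric A) (hω : ∀ i j, ω i j = ω j i) (u g : V → ℝ) :
    ∑ i, pFlux A ω p u i * g i =
      -(1 / 2) * ∑ i, ∑ j, if A i j then ω i j * phiP p (u j - u i) * (g j - g i) else 0 := by
  have hswap : (∑ i, ∑ j, if A i j then ω i j * phiP p (u j - u i) * g j else 0) =
      -∑ i, pFlux A ω p u i * g i := by
    simp only [pFlux, Finset.sum_mul, ← Finset.sum_neg_distrib]
    rw [Finset.sum_comm]
    refine Finset.sum_congr rfl fun i _ => Finset.sum_congr rfl fun j _ => ?_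
    rw [if_congr ⟨fun h => hA h, fun h => hA h⟩ rfl rfl, hω, ← neg_sub, phiP_neg]
    split_ifs <;> ring
  have hsplit : (∑ i, ∑ j, if A i j then ω i j * phiP p (u j - u i) * (g j - g i) else 0) =
      (∑ i, ∑ j, if A i j then ω i j * phiP p (u j - u i) * g j else 0) -
        ∑ i, pFlux A ω p u i * g i := by
    simp only [pFlux, Finset.sum_mul, ← Finset.sum_sub_distrib]
    refine Finset.sum_congr rfl fun i _ => Finset.sum_congr rfl fun j _ => ?_
    split_ifs <;> ring
  rw [hsplit, hswap]
  ring

lemma sum_pFlux (hA : Symmetric A) (hω : ∀ i j, ω i j = ω j i) (u : V → ℝ) :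
    ∑ i, pFlux A ω p u i = 0 := by
  simpa using sum_pFlux_mul hA hω u 1

lemma pEnergy_nonneg (hω : ∀ i j, A i j → 0 < ω i j) (u : V → ℝ) : 0 ≤ pEnergy A ω p u := by
  refine mul_nonneg (by norm_num) (Finset.sum_nonneg fun i _ => Finset.sum_nonneg fun j _ => ?_)
  split_ifs with hij
  · exact mul_nonneg (hω i j hij).le (Real.rpow_nonneg (abs_nonneg _) _)
  · exact le_rfl

lemma continuous_pEnergy (hp : 0 < p) : Continuous (pEnergy A ω p : (V → ℝ) → ℝ) := by
  unfold pEnergy edgeSum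
  refine continuous_const.mul
    (continuous_finsetSum _ fun i _ => continuous_finsetSum _ fun j _ => ?_)
  split_ifs
  · exact continuous_const.mul (((continuous_apply j).sub (continuous_apply i)).abs.rpow_const
      fun _ => Or.inr hp.le)
  · exact continuous_const

lemma hasDerivAt_pEnergy_line (hp : 1 < p) (hA : Symmetric A) (hω : ∀ i j, ω i j = ω j i)
    (u g : V → ℝ) :
    HasDerivAt (fun t : ℝ => pEnergy A ω p (u + t • g))
      (-(p * ∑ i, pFlux A ω p u i * g i)) 0 := by
  have hterm : ∀ i j, HasDerivAt (fun t : ℝ => if A i j then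
      ω i j * |(u + t • g) j - (u + t • g) i| ^ p else 0)
      (if A i j then ω i j * (p * phiP p (u j - u i) * (g j - g i)) else 0) 0 := by
    intro i j
    split_ifs
    · have hline : HasDerivAt (fun t : ℝ => (u j - u i) + t * (g j - g i)) (g j - g i) 0 := by
        simpa using ((hasDerivAt_id (0 : ℝ)).mul_const (g j - g i)).const_add (u j - u i)
      have := ((hasDerivAt_abs_rpow_phiP hp (u j - u i)).comp_of_eq 0 hline (by simp)).const_mul
        (ω i j)
      refine this.congr_of_eventuallyEq (Filter.Eventually.of_forall fun t => ?_)
      simp only [Pi.add_apply, Pi.smul_apply, smul_eq_mul, Function.comp_apply]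
      ring_nf
    · exact hasDerivAt_const _ _
  unfold pEnergy edgeSum
  refine ((HasDerivAt.fun_sum fun i _ => HasDerivAt.fun_sum fun j _ => hterm i j).const_mul
    (1 / 2 : ℝ)).congr_deriv ?_
  rw [sum_pFlux_mul hA hω]
  have hp_out : ∀ i j, (if A i j then ω i j * (p * phiP p (u j - u i) * (g j - g i)) else 0) =
      p * if A i j then ω i j * phiP p (u j - u i) * (g j - g i) else 0 := fun i j => by
    split_ifs <;> ring
  simp only [hp_out, ← Finset.mul_sum]
  ring

end Graph

section Poincare

variable {V : Type*} [Fintype V] {A : V → V → Prop} [DecidableRel A] {ω : V → V → ℝ} {p : ℝ}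

lemma mul_abs_sub_rpow_le_pEnergy (hω : ∀ i j, A i j → 0 < ω i j) (u : V → ℝ) {i j : V}
    (hij : A i j) : ω i j * |u j - u i| ^ p ≤ 2 * pEnergy A ω p u := by
  have hterm : ∀ k l, 0 ≤ if A k l then ω k l * |u l - u k| ^ p else 0 := fun k l => by
    split_ifs with hkl
    · exact mul_nonneg (hω k l hkl).le (Real.rpow_nonneg (abs_nonneg _) _)
    · exact le_rfl
  calc ω i j * |u j - u i| ^ p = if A i j then ω i j * |u j - u i| ^ p else 0 := (if_pos hij).symm
    _ ≤ ∑ l, if A i l then ω i l * |u l - u i| ^ p else 0 :=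
      Finset.single_le_sum (fun l _ => hterm i l) (Finset.mem_univ j)
    _ ≤ ∑ k, ∑ l, if A k l then ω k l * |u l - u k| ^ p else 0 :=
      Finset.single_le_sum (f := fun k => ∑ l, if A k l then ω k l * |u l - u k| ^ p else 0)
        (fun k _ => Finset.sum_nonneg fun l _ => hterm k l) (Finset.mem_univ i)
    _ = 2 * pEnergy A ω p u := by simp only [pEnergy, edgeSum]; ring

lemma abs_sub_le_of_adj (hp : 0 < p) (hω : ∀ i j, A i j → 0 < ω i j) (u : V → ℝ) {i j : V}
    (hij : A i j) : |u j - u i| ≤ (2 / ω i j) ^ p⁻¹ * pEnergy A ω p u ^ p⁻¹ := by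
  have hωij := hω i j hij
  rw [← Real.mul_rpow (by positivity) (pEnergy_nonneg (p := p) hω u),
    Real.le_rpow_inv_iff_of_pos (abs_nonneg _) (by positivity [pEnergy_nonneg (p := p) hω u]) hp,
    div_mul_eq_mul_div, le_div_iff₀ hωij, mul_comm]
  exact mul_abs_sub_rpow_le_pEnergy hω u hij

lemma exists_abs_sub_le_of_reflTransGen (hp : 0 < p) (hω : ∀ i j, A i j → 0 < ω i j) {i j : V}
    (hij : Relation.ReflTransGen A i j) :
    ∃ K ≥ 0, ∀ u : V → ℝ, |u j - u i| ≤ K * pEnergy A ω p u ^ p⁻¹ := by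
  induction hij with
  | refl => exact ⟨0, le_rfl, fun u => by simp⟩
  | @tail k l _ hkl ih =>
    obtain ⟨K, hK0, hK⟩ := ih
    refine ⟨K + (2 / ω k l) ^ p⁻¹, add_nonneg hK0 (Real.rpow_nonneg (by
      have := hω k l hkl; positivity) _), fun u => ?_⟩
    calc |u l - u i| ≤ |u l - u k| + |u k - u i| := abs_sub_le _ _ _
      _ ≤ (2 / ω k l) ^ p⁻¹ * pEnergy A ω p u ^ p⁻¹ + K * pEnergy A ω p u ^ p⁻¹ :=
        add_le_add (abs_sub_le_of_adj hp hω u hkl) (hK u)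
      _ = _ := by ring

/-- A discrete Poincaré inequality. -/
lemma exists_norm_sub_const_le (hp : 0 < p) (hω : ∀ i j, A i j → 0 < ω i j)
    (hconn : ∀ i j : V, Relation.ReflTransGen A i j) (i₀ : V) :
    ∃ K ≥ 0, ∀ u : V → ℝ, ‖u - fun _ => u i₀‖ ≤ K * pEnergy A ω p u ^ p⁻¹ := by
  choose K hK0 hK using fun j => exists_abs_sub_le_of_reflTransGen hp hω (hconn i₀ j)
  have hsum0 : 0 ≤ ∑ j, K j := Finset.sum_nonneg fun j _ => hK0 j
  refine ⟨∑ j, K j, hsum0, fun u => ?_⟩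
  have hE := Real.rpow_nonneg (pEnergy_nonneg (p := p) hω u) p⁻¹
  refine (pi_norm_le_iff_of_nonneg (by positivity)).2 fun j => ?_
  calc ‖(u - fun _ => u i₀ : V → ℝ) j‖ = |u j - u i₀| := rfl
    _ ≤ K j * pEnergy A ω p u ^ p⁻¹ := hK j u
    _ ≤ (∑ j, K j) * pEnergy A ω p u ^ p⁻¹ :=
      mul_le_mul_of_nonneg_right (Finset.single_le_sum (fun j _ => hK0 j) (Finset.mem_univ j)) hE

end Poincare

section Variational

variable {V : Type*} [Fintype V] {A : V → V → Prop} [DecidableRel A] {ω : V → V → ℝ} {p : ℝ}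

variable (A ω p) in
noncomputable def pFunctional (F : V → ℝ → ℝ) (u : V → ℝ) : ℝ :=
  (1 / p) * pEnergy A ω p u + ∑ k, F k (u k)

lemma pFlux_eq_of_forall_pFunctional_le (hp : 1 < p) (hA : Symmetric A)
    (hω : ∀ i j, ω i j = ω j i) {F F' : V → ℝ → ℝ} (hF : ∀ k t, HasDerivAt (F k) (F' k t) t)
    {u : V → ℝ} (hu : ∀ v, pFunctional A ω p F u ≤ pFunctional A ω p F v) (i : V) :
    pFlux A ω p u i = F' i (u i) := by
  classical
  set g : V → ℝ := Pi.single i 1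
  have hmin : IsLocalMin (fun t : ℝ => pFunctional A ω p F (u + t • g)) 0 :=
    Filter.Eventually.of_forall fun t => by simpa using hu (u + t • g)
  have hpot : ∀ k, HasDerivAt (fun t : ℝ => F k ((u + t • g) k)) (F' k (u k) * g k) 0 := by
    intro k
    have hline : HasDerivAt (fun t : ℝ => u k + t * g k) (g k) 0 := by
      simpa using ((hasDerivAt_id (0 : ℝ)).mul_const (g k)).const_add (u k)
    exact (hF k (u k)).comp_of_eq 0 hline (by simp)
  have hderiv := ((hasDerivAt_pEnergy_line hp hA hω u g).const_mul (1 / p)).add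
    (HasDerivAt.fun_sum (u := Finset.univ) fun k _ => hpot k)
  have hzero := hmin.hasDerivAt_eq_zero hderiv
  simp only [g, Pi.single_apply, mul_ite, mul_one, mul_zero, Finset.sum_ite_eq',
    Finset.mem_univ, if_true] at hzero
  field_simp at hzero
  linarith

lemma exists_forall_pFunctional_le (hp : 1 < p) (hω : ∀ i j, A i j → 0 < ω i j)
    (hconn : ∀ i j : V, Relation.ReflTransGen A i j) {F F' : V → ℝ → ℝ}
    (hF : ∀ k t, HasDerivAt (F k) (F' k t) t) (i₀ : V) {β L B : ℝ} (hβ : 0 < β) (hL : 0 ≤ L)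
    (hcoer : ∀ u : V → ℝ, β * |u i₀| - L * ‖u - fun _ => u i₀‖ - B ≤ ∑ k, F k (u k)) :
    ∃ u, ∀ v, pFunctional A ω p F u ≤ pFunctional A ω p F v := by
  have : Nonempty V := ⟨i₀⟩
  obtain ⟨K, hK0, hK⟩ := exists_norm_sub_const_le (zero_lt_one.trans hp) hω hconn i₀
  set a := (L + β) * K
  have ha0 : 0 ≤ a := mul_nonneg (by linarith) hK0
  have hbound : ∀ u, β * ‖u‖ - (B + a ^ p.conjExponent / p.conjExponent) ≤
      pFunctional A ω p F u := by
    intro u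
    set y := pEnergy A ω p u ^ p⁻¹
    have hy : 0 ≤ y := Real.rpow_nonneg (pEnergy_nonneg hω u) _
    have hEy : pEnergy A ω p u = y ^ p :=
      (Real.rpow_inv_rpow (pEnergy_nonneg hω u) (by linarith)).symm
    have hyoung := Real.young_inequality_of_nonneg hy ha0 (Real.HolderConjugate.conjExponent hp)
    have hw : (L + β) * ‖u - fun _ => u i₀‖ ≤ y * a := by
      calc (L + β) * ‖u - fun _ => u i₀‖ ≤ (L + β) * (K * y) :=
            mul_le_mul_of_nonneg_left (hK u) (by linarith)
        _ = y * a := by ring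
    have hnorm : β * ‖u‖ ≤ β * (‖u - fun _ => u i₀‖ + |u i₀|) := by
      refine mul_le_mul_of_nonneg_left ?_ hβ.le
      calc ‖u‖ = ‖(u - fun _ => u i₀) + fun _ => u i₀‖ := by rw [sub_add_cancel]
        _ ≤ ‖u - fun _ => u i₀‖ + ‖fun _ : V => u i₀‖ := norm_add_le _ _
        _ = ‖u - fun _ => u i₀‖ + |u i₀| := by rw [pi_norm_const, Real.norm_eq_abs]
    have := hcoer u
    rw [pFunctional, hEy, one_div_mul_eq_div]
    linarith
  refine (continuous_const.mul (continuous_pEnergy (zero_lt_one.trans hp))).add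
    (continuous_finsetSum _ fun k _ => (continuous_iff_continuousAt.2 fun t =>
      (hF k t).continuousAt).comp (continuous_apply k)) |>.exists_forall_le ?_
  refine Filter.tendsto_atTop_mono hbound ?_
  exact Filter.tendsto_atTop_add_const_right _ _
    (tendsto_norm_cocompact_atTop.const_mul_atTop hβ)

lemma exists_pFlux_eq_of_coercive (hp : 1 < p) (hA : Symmetric A) (hωsymm : ∀ i j, ω i j = ω j i)
    (hωpos : ∀ i j, A i j → 0 < ω i j) (hconn : ∀ i j : V, Relation.ReflTransGen A i j)
    {F F' : V → ℝ → ℝ} (hF : ∀ k t, HasDerivAt (F k) (F' k t) t) (i₀ : V) {β L B : ℝ}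
    (hβ : 0 < β) (hL : 0 ≤ L)
    (hcoer : ∀ u : V → ℝ, β * |u i₀| - L * ‖u - fun _ => u i₀‖ - B ≤ ∑ k, F k (u k)) :
    ∃ u : V → ℝ, ∀ i, pFlux A ω p u i = F' i (u i) := by
  obtain ⟨u, hu⟩ := exists_forall_pFunctional_le hp hωpos hconn hF i₀ hβ hL hcoer
  exact ⟨u, pFlux_eq_of_forall_pFunctional_le hp hA hωsymm hF hu⟩

end Variational

section Poisson

variable {V : Type*} [Fintype V] {A : V → V → Prop} [DecidableRel A] {ω : V → V → ℝ} {p : ℝ}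

lemma exists_pFlux_eq_of_sum_eq_zero [Nonempty V] (hp : 1 < p) (hA : Symmetric A)
    (hωsymm : ∀ i j, ω i j = ω j i) (hωpos : ∀ i j, A i j → 0 < ω i j)
    (hconn : ∀ i j : V, Relation.ReflTransGen A i j) {g : V → ℝ} (hg : ∑ i, g i = 0) :
    ∃ v : V → ℝ, ∀ i, pFlux A ω p v i = g i := by
  classical
  let i₀ := Classical.arbitrary V
  -- The energy and `∑ g k * u k` do not see constants; the term `(u i₀)²` pins `u i₀ = 0`.
  have hF : ∀ k t, HasDerivAt (fun t => g k * t + if k = i₀ then t ^ 2 else 0)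
      (g k + if k = i₀ then 2 * t else 0) t := by
    intro k t
    have hlin := (hasDerivAt_id t).const_mul (g k)
    split_ifs
    · simpa using hlin.fun_add (hasDerivAt_pow 2 t)
    · simpa using hlin
  have hcoer : ∀ u : V → ℝ, 1 * |u i₀| - (∑ k, |g k|) * ‖u - fun _ => u i₀‖ - 1 ≤
      ∑ k, (g k * u k + if k = i₀ then u k ^ 2 else 0) := by
    intro u
    have hshift : ∑ k, g k * u k = ∑ k, g k * (u k - u i₀) := by
      simp only [mul_sub, Finset.sum_sub_distrib, ← Finset.sum_mul, hg, zero_mul, sub_zero]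
    have hlin : -((∑ k, |g k|) * ‖u - fun _ => u i₀‖) ≤ ∑ k, g k * (u k - u i₀) := by
      rw [Finset.sum_mul, ← Finset.sum_neg_distrib]
      refine Finset.sum_le_sum fun k _ => ?_
      have hk : |u k - u i₀| ≤ ‖u - fun _ => u i₀‖ := norm_le_pi_norm (u - fun _ => u i₀) k
      calc -(|g k| * ‖u - fun _ => u i₀‖) ≤ -|g k * (u k - u i₀)| := by
            rw [abs_mul]; exact neg_le_neg (mul_le_mul_of_nonneg_left hk (abs_nonneg _))
        _ ≤ g k * (u k - u i₀) := neg_abs_le _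
    have hsq : |u i₀| - 1 ≤ u i₀ ^ 2 := by nlinarith [sq_abs (u i₀), abs_nonneg (u i₀)]
    rw [Finset.sum_add_distrib, hshift, Finset.sum_ite_eq' Finset.univ i₀, if_pos (mem_univ _)]
    linarith
  obtain ⟨v, hv⟩ := exists_pFlux_eq_of_coercive hp hA hωsymm hωpos hconn hF i₀ one_pos
    (Finset.sum_nonneg fun k _ => abs_nonneg (g k)) hcoer
  have hv₀ : v i₀ = 0 := by
    have := sum_pFlux (p := p) hA hωsymm v
    simp only [hv, Finset.sum_add_distrib, hg, Finset.sum_ite_eq', Finset.mem_univ, if_true]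
      at this
    linarith
  exact ⟨v, fun i => by rw [hv]; split_ifs with h <;> simp [h, hv₀]⟩

end Poisson

section ExpMin

open intervalIntegral

noncomputable def integralExpMin (b t : ℝ) : ℝ := ∫ s in (0 : ℝ)..t, exp (min s b)

lemma continuous_exp_min (b : ℝ) : Continuous fun s => exp (min s b) := by fun_prop

lemma hasDerivAt_integralExpMin (b t : ℝ) :
    HasDerivAt (integralExpMin b) (exp (min t b)) t :=
  ((continuous_exp_min b).integral_hasStrictDerivAt 0 t).hasDerivAt

lemma integralExpMin_sub (b s t : ℝ) :
    integralExpMin b t - integralExpMin b s = ∫ x in s..t, exp (min x b) :=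
  integral_interval_sub_left ((continuous_exp_min b).intervalIntegrable _ _)
    ((continuous_exp_min b).intervalIntegrable _ _)

lemma abs_integralExpMin_sub_le (b s t : ℝ) :
    |integralExpMin b t - integralExpMin b s| ≤ exp b * |t - s| := by
  rw [integralExpMin_sub, ← Real.norm_eq_abs]
  refine norm_integral_le_of_norm_le_const fun x _ => ?_
  rw [Real.norm_of_nonneg (exp_pos _).le]
  exact exp_le_exp.2 (min_le_right x b)

lemma abs_integralExpMin_le_one (b : ℝ) {t : ℝ} (ht : t ≤ 0) : |integralExpMin b t| ≤ 1 := by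
  have hI : integralExpMin b t = -∫ x in t..0, exp (min x b) := integral_symm _ _
  have hlo : 0 ≤ ∫ x in t..0, exp (min x b) := integral_nonneg ht fun x _ => (exp_pos _).le
  have hhi : ∫ x in t..0, exp (min x b) ≤ ∫ x in t..0, exp x :=
    integral_mono_on ht ((continuous_exp_min b).intervalIntegrable _ _)
      (continuous_exp.intervalIntegrable _ _) fun x _ => exp_le_exp.2 (min_le_left x b)
  rw [integral_exp, exp_zero] at hhi
  rw [hI, abs_neg, abs_of_nonneg hlo]
  linarith [exp_pos t]

lemma integralExpMin_eq_add {b s t : ℝ} (hbs : b ≤ s) (hst : s ≤ t) :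
    integralExpMin b t = integralExpMin b s + exp b * (t - s) := by
  have hconst : ∫ x in s..t, exp (min x b) = ∫ _ in s..t, exp b :=
    integral_congr fun x hx => by
      rw [Set.uIcc_of_le hst] at hx
      rw [min_eq_right (hbs.trans hx.1)]
  rw [← integralExpMin_sub b s t, integral_const, smul_eq_mul] at hconst
  linarith

lemma abs_integralExpMin_sub_mul_le (b : ℝ) {t : ℝ} (ht : 0 ≤ t) :
    |integralExpMin b t - exp b * t| ≤ exp b * max b 0 := by
  have hbounds : ∀ s, 0 ≤ s → 0 ≤ integralExpMin b s ∧ integralExpMin b s ≤ exp b * s := by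
    intro s hs
    have hlip := abs_integralExpMin_sub_le b 0 s
    simp only [integralExpMin, integral_same, sub_zero, abs_of_nonneg hs] at hlip
    exact ⟨integral_nonneg hs fun x _ => (exp_pos _).le, (le_abs_self _).trans hlip⟩
  have hm : 0 ≤ max b 0 := le_max_right b 0
  have heb := exp_pos b
  rcases le_total t (max b 0) with htm | htm
  · obtain ⟨h0, h1⟩ := hbounds t ht
    rw [abs_of_nonpos (by linarith)]
    nlinarith
  · obtain ⟨h0, h1⟩ := hbounds (max b 0) hm
    rw [integralExpMin_eq_add (le_max_left b 0) htm, abs_of_nonpos (by nlinarith)]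
    nlinarith

end ExpMin

section KazdanWarner

variable {V : Type*} [Fintype V] {A : V → V → Prop} [DecidableRel A] {ω : V → V → ℝ} {p : ℝ}

lemma pFlux_le_pFlux (hp : 1 < p) (hω : ∀ i j, A i j → 0 < ω i j) {u v : V → ℝ} {i : V}
    (huv : ∀ j, u j - u i ≤ v j - v i) : pFlux A ω p u i ≤ pFlux A ω p v i := by
  refine Finset.sum_le_sum fun j _ => ?_
  split_ifs with hij
  · exact mul_le_mul_of_nonneg_left (phiP_monotone hp (huv j)) (hω i j hij).le
  · exact le_rfl

lemma le_of_pFlux_lt [Nonempty V] (hp : 1 < p) (hω : ∀ i j, A i j → 0 < ω i j) {u b : V → ℝ}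
    (hlt : ∀ i, b i < u i → pFlux A ω p b i < pFlux A ω p u i) (i : V) : u i ≤ b i := by
  obtain ⟨i₀, -, hi₀⟩ := Finset.exists_max_image Finset.univ (fun j => u j - b j)
    Finset.univ_nonempty
  have hmax : ∀ j, u j - b j ≤ u i₀ - b i₀ := fun j => hi₀ j (Finset.mem_univ j)
  suffices u i₀ ≤ b i₀ by linarith [hmax i]
  by_contra! hgt
  have hle := pFlux_le_pFlux (i := i₀) hp hω (u := u) (v := b) fun j => by linarith [hmax j]
  exact (hlt i₀ hgt).not_ge hle

lemma mul_integralExpMin_le (h b s : ℝ) :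
    h * integralExpMin b s ≤ h * exp b * max s 0 + |h| * (1 + exp b * max b 0) := by
  have heb : 0 ≤ |h| * (exp b * max b 0) :=
    mul_nonneg (abs_nonneg h) (mul_nonneg (exp_pos b).le (le_max_right b 0))
  rcases le_total s 0 with hs | hs
  · calc h * integralExpMin b s ≤ |h| * |integralExpMin b s| := by
          rw [← abs_mul]; exact le_abs_self _
      _ ≤ |h| * 1 := mul_le_mul_of_nonneg_left (abs_integralExpMin_le_one b hs) (abs_nonneg h)
      _ ≤ _ := by rw [max_eq_right hs]; linarith
  · have hdev : h * (integralExpMin b s - exp b * s) ≤ |h| * (exp b * max b 0) :=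
      calc _ ≤ |h| * |integralExpMin b s - exp b * s| := by rw [← abs_mul]; exact le_abs_self _
        _ ≤ _ := mul_le_mul_of_nonneg_left (abs_integralExpMin_sub_mul_le b hs) (abs_nonneg h)
    rw [max_eq_left hs]
    nlinarith [abs_nonneg h]

lemma exists_linear_lower_bound_potential [Nonempty V] {μ h b : V → ℝ} (hμ : ∀ k, 0 < μ k)
    {c : ℝ} (hc : c < 0) (hα : 0 < ∑ k, μ k * (c - h k * exp (b k))) :
    ∃ β > 0, ∃ B, ∀ s, β * |s| - B ≤ ∑ k, μ k * (c * s - h k * integralExpMin (b k) s) := by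
  set M := ∑ k, μ k
  have hM : 0 < M := Finset.sum_pos (fun k _ => hμ k) Finset.univ_nonempty
  set α := ∑ k, μ k * (c - h k * exp (b k))
  set X : V → ℝ := fun k => |h k| * (1 + exp (b k) * max (b k) 0)
  refine ⟨min (-c * M) α, lt_min (by nlinarith) hα, ∑ k, μ k * X k, fun s => ?_⟩
  have hsum : ∑ k, (μ k * (c * s - h k * exp (b k) * max s 0) - μ k * X k) ≤
      ∑ k, μ k * (c * s - h k * integralExpMin (b k) s) :=
    Finset.sum_le_sum fun k _ => by
      nlinarith [mul_le_mul_of_nonneg_left (mul_integralExpMin_le (h k) (b k) s) (hμ k).le]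
  rw [Finset.sum_sub_distrib] at hsum
  rcases le_total s 0 with hs | hs
  · have hlin : ∑ k, μ k * (c * s - h k * exp (b k) * max s 0) = M * (c * s) := by
      simp only [max_eq_right hs, mul_zero, sub_zero, M, Finset.sum_mul]
    have : min (-c * M) α * |s| ≤ M * (c * s) := by
      rw [abs_of_nonpos hs]
      nlinarith [min_le_left (-c * M) α]
    linarith
  · have hlin : ∑ k, μ k * (c * s - h k * exp (b k) * max s 0) = α * s := by
      simp only [max_eq_left hs, α, Finset.sum_mul]
      exact Finset.sum_congr rfl fun k _ => by ring
    have : min (-c * M) α * |s| ≤ α * s := by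
      rw [abs_of_nonneg hs]
      exact mul_le_mul_of_nonneg_right (min_le_right _ _) hs
    linarith

lemma abs_potential_sub_le {μ : ℝ} (hμ : 0 ≤ μ) (c h b s t : ℝ) :
    |μ * (c * t - h * integralExpMin b t) - μ * (c * s - h * integralExpMin b s)| ≤
      μ * (|c| + |h| * exp b) * |t - s| := by
  have hI := mul_le_mul_of_nonneg_left (abs_integralExpMin_sub_le b s t) (abs_nonneg h)
  calc _ = μ * |c * (t - s) - h * (integralExpMin b t - integralExpMin b s)| := by
        rw [← mul_sub, abs_mul, abs_of_nonneg hμ]; congr 2; ring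
    _ ≤ μ * (|c| * |t - s| + |h| * (exp b * |t - s|)) := by
        refine mul_le_mul_of_nonneg_left ((abs_sub _ _).trans ?_) hμ
        rw [abs_mul, abs_mul]
        linarith
    _ = _ := by ring

lemma exists_pLap_eq_of_lt [Nonempty V] (hp : 1 < p) (hA : Symmetric A)
    (hωsymm : ∀ i j, ω i j = ω j i) (hωpos : ∀ i j, A i j → 0 < ω i j) {μ : V → ℝ}
    (hμ : ∀ i, 0 < μ i) (hconn : ∀ i j : V, Relation.ReflTransGen A i j) {h : V → ℝ} {c : ℝ}
    (hc : c < 0) {b : V → ℝ} (hb : ∀ i, pLap p A ω μ b i < c - h i * exp (b i)) :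
    ∃ u : V → ℝ, ∀ i, pLap p A ω μ u i = c - h i * exp (u i) := by
  have hb' : ∀ i, pFlux A ω p b i < μ i * (c - h i * exp (b i)) := fun i => by
    have := hb i
    rwa [pLap_eq_pFlux_div, div_lt_iff₀' (hμ i)] at this
  have hα : 0 < ∑ k, μ k * (c - h k * exp (b k)) := by
    rw [← sum_pFlux (p := p) hA hωsymm b]
    exact Finset.sum_lt_sum_of_nonempty Finset.univ_nonempty fun k _ => hb' k
  obtain ⟨β, hβ, B, hψ⟩ := exists_linear_lower_bound_potential hμ hc hα
  set F : V → ℝ → ℝ := fun k t => μ k * (c * t - h k * integralExpMin (b k) t)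
  have hF : ∀ k t, HasDerivAt (F k) (μ k * (c - h k * exp (min t (b k)))) t := fun k t =>
    (((hasDerivAt_id t).const_mul c).sub ((hasDerivAt_integralExpMin (b k) t).const_mul (h k))
      |>.const_mul (μ k)).congr_deriv (by simp)
  set Lk : V → ℝ := fun k => μ k * (|c| + |h k| * exp (b k))
  have hLk : ∀ k, 0 ≤ Lk k := fun k => by positivity [hμ k]
  have hlip : ∀ k s t, F k s - Lk k * |t - s| ≤ F k t := fun k s t => by
    linarith [(abs_le.1 (abs_potential_sub_le (hμ k).le c (h k) (b k) s t)).1]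
  let i₀ := Classical.arbitrary V
  have hcoer : ∀ u : V → ℝ, β * |u i₀| - (∑ k, Lk k) * ‖u - fun _ => u i₀‖ - B ≤
      ∑ k, F k (u k) := by
    intro u
    have hsum : ∑ k, (F k (u i₀) - Lk k * ‖u - fun _ => u i₀‖) ≤ ∑ k, F k (u k) :=
      Finset.sum_le_sum fun k _ => (sub_le_sub_left (mul_le_mul_of_nonneg_left
        (norm_le_pi_norm (u - fun _ => u i₀) k) (hLk k)) _).trans (hlip k (u i₀) (u k))
    rw [Finset.sum_sub_distrib, ← Finset.sum_mul] at hsum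
    linarith [hψ (u i₀)]
  obtain ⟨u, hu⟩ := exists_pFlux_eq_of_coercive hp hA hωsymm hωpos hconn hF i₀ hβ
    (Finset.sum_nonneg fun k _ => hLk k) hcoer
  have hub : ∀ i, u i ≤ b i := le_of_pFlux_lt hp hωpos fun i hi => by
    rw [hu i, min_eq_right hi.le]
    exact hb' i
  refine ⟨u, fun i => ?_⟩
  rw [pLap_eq_pFlux_div, hu i, min_eq_left (hub i), mul_div_cancel_left₀ _ (hμ i).ne']

end KazdanWarner

open Filter Topology in
lemma exists_pLap_add_mul_exp_le {V : Type*} [Fintype V] [Nonempty V] {p : ℝ} (hp : 1 < p)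
    {A : V → V → Prop} [DecidableRel A] (hA : Symmetric A) {ω : V → V → ℝ}
    (hωsymm : ∀ i j, ω i j = ω j i) (hωpos : ∀ i j, A i j → 0 < ω i j) {μ : V → ℝ}
    (hμ : ∀ i, 0 < μ i) (hconn : ∀ i j : V, Relation.ReflTransGen A i j) {h : V → ℝ}
    (hbar : (∑ i, μ i * h i) / (∑ i, μ i) < 0) :
    ∃ Ch > (0 : ℝ), ∃ b : V → ℝ, ∀ i, pLap p A ω μ b i + h i * exp (b i) ≤ -Ch := by
  set m := (∑ i, μ i * h i) / (∑ i, μ i)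
  have hM : 0 < ∑ i, μ i := Finset.sum_pos (fun i _ => hμ i) Finset.univ_nonempty
  have hmean : ∑ i, μ i * (m - h i) = 0 := by
    simp only [mul_sub, Finset.sum_sub_distrib, ← Finset.sum_mul, m]
    field_simp
    ring
  obtain ⟨v, hv⟩ := exists_pFlux_eq_of_sum_eq_zero hp hA hωsymm hωpos hconn hmean
  have hsmall : ∀ᶠ δ in 𝓝[>] (0 : ℝ), ∀ i, h i * (exp (δ * v i) - 1) < -m / 2 := by
    refine eventually_all.2 fun i => Filter.Eventually.filter_mono nhdsWithin_le_nhds ?_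
    have hcont : Tendsto (fun δ : ℝ => h i * (exp (δ * v i) - 1)) (𝓝 0) (𝓝 0) := by
      have : Continuous fun δ : ℝ => h i * (exp (δ * v i) - 1) := by fun_prop
      simpa using this.tendsto 0
    exact hcont.eventually (gt_mem_nhds (by linarith))
  obtain ⟨δ, hδ, hδpos⟩ := (hsmall.and self_mem_nhdsWithin).exists
  have hδp : 0 < δ ^ (p - 1) := Real.rpow_pos_of_pos hδpos _
  refine ⟨δ ^ (p - 1) * (-m) / 2, by nlinarith, fun j => δ * v j + (p - 1) * log δ, fun i => ?_⟩
  have hexp : exp (δ * v i + (p - 1) * log δ) = δ ^ (p - 1) * exp (δ * v i) := by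
    rw [exp_add, Real.rpow_def_of_pos hδpos, mul_comm (p - 1), mul_comm]
  rw [pLap_eq_pFlux_div, pFlux_smul_add_const hδpos, hv, hexp, mul_div_assoc,
    mul_div_cancel_left₀ _ (hμ i).ne']
  nlinarith [hδ i]

/-- if `h̄ < 0` there is `C_h > 0` so that for all `-C_h ≤ c < 0` the equation
`Δ_p u = c - h e^u` has an upper solution; consequently there is `c₋(h) ∈ [-∞, 0)` such that
the equation has a solution for every `c ∈ (c₋(h), 0)`. -/
theorem stmt19 {V : Type*} [Fintype V] [Nonempty V] (p : ℝ) (hp : 1 < p)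
    (A : V → V → Prop) [DecidableRel A] (hA : Symmetric A)
    (ω : V → V → ℝ) (hωsymm : ∀ i j, ω i j = ω j i) (hωpos : ∀ i j, A i j → 0 < ω i j)
    (μ : V → ℝ) (hμ : ∀ i, 0 < μ i)
    (hconn : ∀ i j : V, Relation.ReflTransGen A i j) (h : V → ℝ) (hbar : (∑ i, μ i * h i) / (∑ i, μ i) < 0) :
    (∃ Ch > (0:ℝ), ∀ c : ℝ, -Ch ≤ c → c < 0 →
      ∃ up : V → ℝ, ∀ i, pLap p A ω μ up i - c + h i * Real.exp (up i) ≤ 0) ∧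
    ∃ cm : EReal, cm < 0 ∧ ∀ c : ℝ, cm < (c : EReal) → c < 0 →
      ∃ u : V → ℝ, ∀ i, pLap p A ω μ u i = c - h i * Real.exp (u i) := by
  obtain ⟨Ch, hCh, b, hb⟩ := exists_pLap_add_mul_exp_le hp hA hωsymm hωpos hμ hconn hbar
  refine ⟨⟨Ch, hCh, fun c hc _ => ⟨b, fun i => by linarith [hb i]⟩⟩, ((-Ch : ℝ) : EReal),
    EReal.coe_lt_coe_iff.2 (neg_neg_of_pos hCh), fun c hc hc0 => ?_⟩
  have hc' : -Ch < c := EReal.coe_lt_coe_iff.1 hc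
  exact exists_pLap_eq_of_lt hp hA hωsymm hωpos hμ hconn hc0 fun i => by linarith [hb i]
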